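/- Let X satisfy RIP of order k with constant δ_k < 1, and let J₁, J₂ ⊂ [p] be disjoint with |J₁ ∪ J₂| ≤ k. Then for every vector a, (1−δ_k)‖a‖₂² ≤ ‖(I_n − P_{J₁}) X_{J₂} a‖₂² ≤ (1+δ_k)‖a‖₂², where P_{J₁} is the orthogonal projection onto the column space of X_{J₁}. -/
import Mathlib


open scoped Classical
open Matrix

noncomputable def norm2 {m : Type*} [Fintype m] (x : m → ℝ) : ℝ :=
  Real.sqrt (∑ i, (x i) ^ 2)

noncomputable def KSparse {p : ℕ} (k : ℕ) (b : Fin p → ℝ) : Prop :=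
  (Finset.univ.filter fun j => b j ≠ 0).card ≤ k

def RIPwith {n p : ℕ} (X : Matrix (Fin n) (Fin p) ℝ) (k : ℕ) (δ : ℝ) : Prop :=
  ∀ b : Fin p → ℝ, KSparse k b →
    (1 - δ) * (norm2 b) ^ 2 ≤ (norm2 (X.mulVec b)) ^ 2 ∧
    (norm2 (X.mulVec b)) ^ 2 ≤ (1 + δ) * (norm2 b) ^ 2

/-- The submatrix of `X` formed by the columns indexed by `J`. -/
def colSub {n p : ℕ} (X : Matrix (Fin n) (Fin p) ℝ) (J : Finset (Fin p)) :
    Matrix (Fin n) J ℝ :=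
  Matrix.of fun i j => X i (j : Fin p)

/-- The Moore–Penrose pseudoinverse `(X_Jᵀ X_J)⁻¹ X_Jᵀ` of the full-column-rank
submatrix `X_J`. -/
noncomputable def pinv {n p : ℕ} (X : Matrix (Fin n) (Fin p) ℝ) (J : Finset (Fin p)) :
    Matrix J (Fin n) ℝ :=
  ((colSub X J)ᵀ * colSub X J)⁻¹ * (colSub X J)ᵀ

/-- The orthogonal projection matrix `P_J = X_J X_J^†` onto `col(X_J)`. -/
noncomputable def projMat {n p : ℕ} (X : Matrix (Fin n) (Fin p) ℝ) (J : Finset (Fin p)) :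
    Matrix (Fin n) (Fin n) ℝ :=
  colSub X J * pinv X J

section helpers

variable {n p : ℕ}

/-- Extend a vector on `J` by zero to all of `Fin p`. -/
noncomputable def extv (J : Finset (Fin p)) (v : J → ℝ) : Fin p → ℝ :=
  fun j => if h : j ∈ J then v ⟨j, h⟩ else 0

lemma extv_eq_zero {J : Finset (Fin p)} {v : J → ℝ} {j : Fin p} (h : j ∉ J) :
    extv J v j = 0 := dif_neg h

lemma norm2_sq {m : Type*} [Fintype m] (x : m → ℝ) : (norm2 x) ^ 2 = ∑ i, x i ^ 2 :=
  Real.sq_sqrt (Finset.sum_nonneg fun i _ => sq_nonneg _)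

lemma sum_mul_extv (J : Finset (Fin p)) (v : J → ℝ) (f : Fin p → ℝ) :
    ∑ j, f j * extv J v j = ∑ j : J, f (j : Fin p) * v j := by
  rw [← Finset.sum_subset J.subset_univ
    (fun x _ hx => by simp [extv_eq_zero hx])]
  rw [← Finset.sum_attach J fun j => f j * extv J v j]
  rw [Finset.univ_eq_attach]
  exact Finset.sum_congr rfl fun j _ => by simp [extv, j.2]

lemma mulVec_extv (X : Matrix (Fin n) (Fin p) ℝ) (J : Finset (Fin p)) (v : J → ℝ) :
    X.mulVec (extv J v) = (colSub X J).mulVec v := by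
  funext i
  simpa [Matrix.mulVec, dotProduct, colSub] using sum_mul_extv J v (X i)

lemma sum_sq_extv (J : Finset (Fin p)) (v : J → ℝ) :
    ∑ j, extv J v j ^ 2 = ∑ j : J, v j ^ 2 := by
  calc ∑ j, extv J v j ^ 2 = ∑ j, extv J v j * extv J v j := by
        exact Finset.sum_congr rfl fun j _ => sq (extv J v j) ▸ (sq (extv J v j)).symm ▸ (by ring)
    _ = ∑ j : J, extv J v (j : Fin p) * v j := sum_mul_extv J v (extv J v)
    _ = ∑ j : J, v j ^ 2 := Finset.sum_congr rfl fun j _ => by simp [extv, j.2, sq]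

lemma ksparse_extv_add (J1 J2 : Finset (Fin p)) (c : J1 → ℝ) (a : J2 → ℝ) (k : ℕ)
    (h : (J1 ∪ J2).card ≤ k) :
    KSparse k (fun j => extv J1 c j + extv J2 a j) := by
  refine le_trans (Finset.card_le_card ?_) h
  intro j hj
  simp only [Finset.mem_filter] at hj
  by_contra hjJ
  simp only [Finset.mem_union, not_or] at hjJ
  exact hj.2 (by rw [extv_eq_zero hjJ.1, extv_eq_zero hjJ.2, add_zero])

lemma ksparse_extv (J : Finset (Fin p)) (v : J → ℝ) (k : ℕ) (h : J.card ≤ k) :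
    KSparse k (extv J v) := by
  refine le_trans (Finset.card_le_card ?_) h
  intro j hj
  simp only [Finset.mem_filter] at hj
  by_contra hjJ
  exact hj.2 (extv_eq_zero hjJ)

lemma sum_sq_add_disjoint (J1 J2 : Finset (Fin p)) (hd : Disjoint J1 J2)
    (c : J1 → ℝ) (a : J2 → ℝ) :
    ∑ j, (extv J1 c j + extv J2 a j) ^ 2 = (∑ j : J1, c j ^ 2) + ∑ j : J2, a j ^ 2 := by
  have hz : ∀ j, extv J1 c j * extv J2 a j = 0 := by
    intro j
    by_cases h1 : j ∈ J1
    · rw [extv_eq_zero (Finset.disjoint_left.mp hd h1), mul_zero]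
    · rw [extv_eq_zero h1, zero_mul]
  calc ∑ j, (extv J1 c j + extv J2 a j) ^ 2
      = ∑ j, (extv J1 c j ^ 2 + extv J2 a j ^ 2) :=
        Finset.sum_congr rfl fun j _ => by linear_combination 2 * hz j
    _ = (∑ j, extv J1 c j ^ 2) + ∑ j, extv J2 a j ^ 2 := Finset.sum_add_distrib
    _ = _ := by rw [sum_sq_extv, sum_sq_extv]

lemma norm2_sq_dot {m : Type*} [Fintype m] (x : m → ℝ) :
    (norm2 x) ^ 2 = x ⬝ᵥ x := by
  rw [norm2_sq]
  exact Finset.sum_congr rfl fun i _ => (sq (x i))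

end helpers

/-- Projected RIP bound: for disjoint `J₁, J₂` with `|J₁ ∪ J₂| ≤ k` and `δ_k < 1`,
`(1−δ_k)‖a‖₂² ≤ ‖(I − P_{J₁}) X_{J₂} a‖₂² ≤ (1+δ_k)‖a‖₂²`. -/
theorem projected_rip_bound {n p : ℕ} (X : Matrix (Fin n) (Fin p) ℝ)
    (k : ℕ) (δ : ℝ) (hδ0 : 0 ≤ δ) (hδ1 : δ < 1) (hRIP : RIPwith X k δ)
    (J1 J2 : Finset (Fin p)) (hdisj : Disjoint J1 J2)
    (hcard : (J1 ∪ J2).card ≤ k) (a : J2 → ℝ) :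
    (1 - δ) * (norm2 a) ^ 2 ≤
      (norm2 (((1 : Matrix (Fin n) (Fin n) ℝ) - projMat X J1).mulVec
        ((colSub X J2).mulVec a))) ^ 2 ∧
    (norm2 (((1 : Matrix (Fin n) (Fin n) ℝ) - projMat X J1).mulVec
        ((colSub X J2).mulVec a))) ^ 2 ≤ (1 + δ) * (norm2 a) ^ 2 := by
  set y : Fin n → ℝ := (colSub X J2).mulVec a with hy
  set c : J1 → ℝ := -((pinv X J1).mulVec y) with hc
  set b : Fin p → ℝ := fun j => extv J1 c j + extv J2 a j with hb
  have hXb : X.mulVec b =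
      ((1 : Matrix (Fin n) (Fin n) ℝ) - projMat X J1).mulVec y := by
    have hb' : b = extv J1 c + extv J2 a := rfl
    rw [hb', Matrix.mulVec_add, mulVec_extv, mulVec_extv,
      Matrix.sub_mulVec, Matrix.one_mulVec, projMat, ← Matrix.mulVec_mulVec,
      hc, Matrix.mulVec_neg]
    abel
  have hKb : KSparse k b := ksparse_extv_add J1 J2 c a k hcard
  have hnormb : (norm2 b) ^ 2 = (∑ j : J1, c j ^ 2) + ∑ j : J2, a j ^ 2 := by
    rw [norm2_sq]
    exact sum_sq_add_disjoint J1 J2 hdisj c a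
  have hna : (norm2 a) ^ 2 = ∑ j : J2, a j ^ 2 := norm2_sq a
  have hcsq : (0 : ℝ) ≤ ∑ j : J1, c j ^ 2 := Finset.sum_nonneg fun _ _ => sq_nonneg _
  have hRb := hRIP b hKb
  -- upper bound on ‖y‖²
  have hKa : KSparse k (extv J2 a) :=
    ksparse_extv J2 a k (le_trans (Finset.card_le_card Finset.subset_union_right) hcard)
  have hy2 : (norm2 y) ^ 2 ≤ (1 + δ) * (norm2 a) ^ 2 := by
    have h := (hRIP _ hKa).2
    rw [mulVec_extv] at h
    have hne : (norm2 (extv J2 a)) ^ 2 = (norm2 a) ^ 2 := by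
      rw [norm2_sq, norm2_sq, sum_sq_extv]
    rw [hne] at h
    exact h
  constructor
  · -- lower bound
    calc (1 - δ) * (norm2 a) ^ 2 ≤ (1 - δ) * (norm2 b) ^ 2 := by
          apply mul_le_mul_of_nonneg_left _ (by linarith)
          rw [hnormb, hna]; linarith
      _ ≤ (norm2 (X.mulVec b)) ^ 2 := hRb.1
      _ = _ := by rw [hXb]
  · -- upper bound
    by_cases hG : IsUnit ((colSub X J1)ᵀ * colSub X J1).det
    · set w : Fin n → ℝ :=
        ((1 : Matrix (Fin n) (Fin n) ℝ) - projMat X J1).mulVec y with hw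
      have hkey : (colSub X J1)ᵀ *
          ((1 : Matrix (Fin n) (Fin n) ℝ) - projMat X J1) = 0 := by
        rw [Matrix.mul_sub, Matrix.mul_one, projMat, pinv,
          ← Matrix.mul_assoc, ← Matrix.mul_assoc,
          Matrix.mul_nonsing_inv _ hG, Matrix.one_mul, sub_self]
      have hwP : w ⬝ᵥ ((projMat X J1).mulVec y) = 0 := by
        rw [projMat, ← Matrix.mulVec_mulVec, Matrix.dotProduct_mulVec]
        have hv : Matrix.vecMul w (colSub X J1) = 0 := by
          have h1 : Matrix.vecMul w (colSub X J1) = (colSub X J1)ᵀ.mulVec w :=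
            (Matrix.mulVec_transpose (colSub X J1) w).symm
          rw [h1, hw, Matrix.mulVec_mulVec, hkey, Matrix.zero_mulVec]
        rw [hv, zero_dotProduct]
      have hdecomp : y = w + (projMat X J1).mulVec y := by
        rw [hw, Matrix.sub_mulVec, Matrix.one_mulVec]
        abel
      have hPy : (0 : ℝ) ≤ ((projMat X J1).mulVec y) ⬝ᵥ ((projMat X J1).mulVec y) :=
        Finset.sum_nonneg fun i _ => mul_self_nonneg _
      have hsplit : y ⬝ᵥ y = w ⬝ᵥ w +
          ((projMat X J1).mulVec y) ⬝ᵥ ((projMat X J1).mulVec y) := by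
        conv_lhs => rw [hdecomp]
        rw [add_dotProduct, dotProduct_add, dotProduct_add,
          hwP, dotProduct_comm ((projMat X J1).mulVec y) w, hwP]
        ring
      have hw2 : (norm2 w) ^ 2 ≤ (norm2 y) ^ 2 := by
        rw [norm2_sq_dot, norm2_sq_dot]
        linarith
      exact le_trans hw2 hy2
    · have hpinv : pinv X J1 = 0 := by
        rw [pinv, Matrix.nonsing_inv_apply_not_isUnit _ hG, Matrix.zero_mul]
      have hP : projMat X J1 = 0 := by rw [projMat, hpinv, Matrix.mul_zero]
      rw [hP, sub_zero, Matrix.one_mulVec]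
      exact hy2
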